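/- Let X, Y be metric spaces, w a weight on X, and f: X → Y with B_f = sup_{z∈X} D*f(z)/w(z) < ∞. Then f is Lipschitz from the weighted distance d_w on X to the inner (length) distance d₁ on Y: d₁(f(x), f(y)) ≤ B_f · d_w(x,y) for all x, y ∈ X for which Γ(x,y) ≠ ∅. -/

import Mathlib

open Set Filter Metric ENNReal NNReal

/-- `D* f x`: upper dilation of `f` at `x` (0 at isolated points). -/
noncomputable def Dstar {X Y : Type*} [MetricSpace X] [MetricSpace Y] (f : X → Y) (x : X) :
    ℝ≥0∞ :=
  Filter.limsup (fun y => edist (f x) (f y) / edist x y) (nhdsWithin x {x}ᶜ)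

/-- A curve parametrized on `[0,1]` joining `x` to `y`. -/
def IsCurveFrom {X : Type*} [MetricSpace X] (γ : ℝ → X) (x y : X) : Prop :=
  ContinuousOn γ (Set.Icc 0 1) ∧ γ 0 = x ∧ γ 1 = y

/-- Rectifiability of a curve parametrized on `[0,1]`. -/
def RectifiableCurve {X : Type*} [MetricSpace X] (γ : ℝ → X) : Prop :=
  eVariationOn γ (Set.Icc 0 1) ≠ ⊤

/-- `I` is the curve integral of `g` along `γ : [0,1] → X` (limit of Riemann sums with respect
to arclength). -/
def IsCurveIntegral {X : Type*} [MetricSpace X] (γ : ℝ → X) (g : X → ℝ) (I : ℝ) : Prop :=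
  ∀ ε > 0, ∃ δ > 0, ∀ n : ℕ, ∀ t s : ℕ → ℝ,
    0 < n → t 0 = 0 → t n = 1 →
    (∀ i < n, t i < t (i + 1)) →
    (∀ i < n, t (i + 1) - t i < δ) →
    (∀ i < n, s i ∈ Set.Icc (t i) (t (i + 1))) →
    |I - ∑ i ∈ Finset.range n,
        g (γ (s i)) * (eVariationOn γ (Set.Icc (t i) (t (i + 1)))).toReal| < ε

/-- The weighted distance `d_w`. -/
noncomputable def wDist {X : Type*} [MetricSpace X] (w : X → ℝ) (x y : X) : ℝ :=
  sInf {I | ∃ γ : ℝ → X, IsCurveFrom γ x y ∧ RectifiableCurve γ ∧ IsCurveIntegral γ w I}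

/-- The inner (length) distance `d₁`. -/
noncomputable def innerDist {Y : Type*} [MetricSpace Y] (u v : Y) : ℝ :=
  sInf {L | ∃ δ : ℝ → Y, IsCurveFrom δ u v ∧ eVariationOn δ (Set.Icc 0 1) = ENNReal.ofReal L}

/-- The class `RO^K_w(X,Y)` of regularly oscillating mappings. -/
def RegOsc {X Y : Type*} [MetricSpace X] [MetricSpace Y] (w : X → ℝ) (K : ℝ) (f : X → Y) :
    Prop :=
  (∀ x, Dstar f x ≠ ⊤) ∧
  (∀ x : X, ∀ r : ℝ, 0 < r → r < w x → Bornology.IsBounded (f '' Metric.ball x r)) ∧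
  (∀ x : X, ∀ r : ℝ, 0 < r → r < w x →
    Dstar f x ≤ ENNReal.ofReal ((K / r) * ⨆ y : Metric.ball x r, dist (f x) (f y)))

/-!
On a fine uniform partition of a rectifiable curve `γ`, pick on each piece a point where
`w ∘ γ` is maximal. Along that piece `D*f ≤ B · max w`, and a continuous-induction argument
turns this pointwise bound on the dilation into `ℓ(f ∘ γ|piece) ≤ B · max w · ℓ(γ|piece)`.
Summing, `ℓ(f ∘ γ)` is at most `B` times a Riemann sum of `∫_γ w`, so `d₁(f x, f y) ≤ B ∫_γ w`.
The infimum defining `d_w` is over a nonempty set: for a rectifiable `γ` the Riemann sums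
converge to the Lebesgue–Stieltjes integral of `w ∘ γ` against the arclength function.
-/

open MeasureTheory Topology

section Variation

variable {E F : Type*} [PseudoEMetricSpace E] [PseudoEMetricSpace F] {φ : ℝ → E} {γ : ℝ → F}
  {a b : ℝ} {c : ℝ≥0∞}

theorem edist_le_mul_eVariationOn_of_eventually (hab : a ≤ b)
    (hloc : ∀ t ∈ Icc a b, ∀ᶠ s in 𝓝[Icc a b] t, edist (φ t) (φ s) ≤ c * edist (γ t) (γ s)) :
    edist (φ a) (φ b) ≤ c * eVariationOn γ (Icc a b) := by
  -- continuous induction: the supremum of the good set `S` lies in `S` and cannot be `< b`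
  set S := {t ∈ Icc a b | edist (φ a) (φ t) ≤ c * eVariationOn γ (Icc a t)}
  have hextend : ∀ p ∈ S, ∀ q ≤ b, p ≤ q →
      edist (φ p) (φ q) ≤ c * edist (γ p) (γ q) → q ∈ S := by
    rintro p ⟨⟨hap, -⟩, hp⟩ q hqb hpq hpq'
    refine ⟨⟨hap.trans hpq, hqb⟩, ?_⟩
    calc edist (φ a) (φ q) ≤ edist (φ a) (φ p) + edist (φ p) (φ q) := edist_triangle _ _ _
      _ ≤ c * eVariationOn γ (Icc a p) + c * eVariationOn γ (Icc p q) := by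
          refine add_le_add hp (hpq'.trans ?_)
          gcongr
          exact eVariationOn.edist_le γ (left_mem_Icc.2 hpq) (right_mem_Icc.2 hpq)
      _ = c * eVariationOn γ (Icc a q) := by
          rw [← mul_add]
          simpa using congrArg (c * ·) (eVariationOn.Icc_add_Icc γ hap hpq (mem_univ p))
  have haS : a ∈ S := ⟨left_mem_Icc.2 hab, by simp⟩
  have hSbdd : BddAbove S := ⟨b, fun t ht => ht.1.2⟩
  set m := sSup S
  have hm : m ∈ Icc a b := ⟨le_csSup hSbdd haS, csSup_le ⟨a, haS⟩ fun t ht => ht.1.2⟩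
  obtain ⟨ε, hε, hball⟩ := Metric.eventually_nhds_iff.1 (eventually_nhdsWithin_iff.1 (hloc m hm))
  have hmS : m ∈ S := by
    obtain ⟨p, hpS, hp⟩ := exists_lt_of_lt_csSup ⟨a, haS⟩ (sub_lt_self m hε)
    have hpm : p ≤ m := le_csSup hSbdd hpS
    refine hextend p hpS m hm.2 hpm ?_
    rw [edist_comm, edist_comm (γ p)]
    exact hball (by rw [Real.dist_eq, abs_lt]; constructor <;> linarith) hpS.1
  have hmb : m = b := by
    by_contra hmb
    have hq : m < min b (m + ε / 2) := lt_min (hm.2.lt_of_ne hmb) (by linarith)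
    have hqS := hextend m hmS _ (min_le_left _ _) hq.le <| hball
      (by rw [Real.dist_eq, abs_lt]; constructor <;> linarith [min_le_right b (m + ε / 2)])
      ⟨hm.1.trans hq.le, min_le_left _ _⟩
    exact (le_csSup hSbdd hqS).not_gt hq
  exact hmb ▸ hmS.2

theorem eVariationOn_le_mul_of_eventually
    (hloc : ∀ t ∈ Icc a b, ∀ᶠ s in 𝓝[Icc a b] t, edist (φ t) (φ s) ≤ c * edist (γ t) (γ s)) :
    eVariationOn φ (Icc a b) ≤ c * eVariationOn γ (Icc a b) := by
  refine iSup_le fun ⟨n, u, hu, hus⟩ => ?_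
  calc ∑ i ∈ Finset.range n, edist (φ (u (i + 1))) (φ (u i))
      ≤ ∑ i ∈ Finset.range n, c * eVariationOn γ (Icc (u i) (u (i + 1))) := by
        refine Finset.sum_le_sum fun i _ => ?_
        have hsub : Icc (u i) (u (i + 1)) ⊆ Icc a b := Icc_subset_Icc (hus i).1 (hus (i + 1)).2
        rw [edist_comm]
        exact edist_le_mul_eVariationOn_of_eventually (hu i.le_succ) fun t ht =>
          nhdsWithin_mono t hsub (hloc t (hsub ht))
    _ = c * eVariationOn γ (Icc (u 0) (u n)) := by rw [← Finset.mul_sum, eVariationOn.sum' γ hu]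
    _ ≤ c * eVariationOn γ (Icc a b) := by
        gcongr
        exact eVariationOn.mono γ (Icc_subset_Icc (hus 0).1 (hus n).2)

end Variation

section Dilation

variable {X Y : Type*} [MetricSpace X] [MetricSpace Y] {f : X → Y}

theorem eventually_edist_le_of_Dstar_lt {z : X} {c : ℝ≥0∞} (h : Dstar f z < c) :
    ∀ᶠ u in 𝓝 z, edist (f z) (f u) ≤ c * edist z u := by
  have hlt := eventually_nhdsWithin_iff.1 (eventually_lt_of_limsup_lt h)
  filter_upwards [hlt] with u hu
  rcases eq_or_ne u z with rfl | hne
  · simp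
  · exact (ENNReal.div_le_iff (edist_pos.2 hne.symm).ne' (edist_ne_top _ _)).1 (hu hne).le

theorem continuousAt_of_Dstar_ne_top {z : X} (h : Dstar f z ≠ ⊤) : ContinuousAt f z := by
  obtain ⟨c, hzc, hc⟩ := exists_between h.lt_top
  have hlim : Tendsto (fun u => c * edist u z) (𝓝 z) (𝓝 0) := by
    simpa using ENNReal.Tendsto.const_mul
      ((tendsto_id (x := 𝓝 z)).edist (tendsto_const_nhds (x := z))) (Or.inr hc.ne)
  refine tendsto_iff_edist_tendsto_0.2 (tendsto_of_tendsto_of_tendsto_of_le_of_le'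
    tendsto_const_nhds hlim (Eventually.of_forall fun _ => zero_le) ?_)
  filter_upwards [eventually_edist_le_of_Dstar_lt hzc] with u hu
  rwa [edist_comm, edist_comm u]

end Dilation

theorem StieltjesFunction.abs_integral_sub_sum_le (F : StieltjesFunction ℝ) {h : ℝ → ℝ}
    {n : ℕ} {t c : ℕ → ℝ} {ε : ℝ} (ht : ∀ i < n, t i ≤ t (i + 1))
    (hint : ∀ i < n, IntervalIntegrable h F.measure (t i) (t (i + 1)))
    (hh : ∀ i < n, ∀ u ∈ Icc (t i) (t (i + 1)), |h u - c i| ≤ ε) :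
    |∫ u in t 0..t n, h u ∂F.measure - ∑ i ∈ Finset.range n, c i * (F (t (i + 1)) - F (t i))|
      ≤ ε * (F (t n) - F (t 0)) := by
  have hpiece : ∀ i < n, |∫ u in t i..t (i + 1), h u ∂F.measure - c i * (F (t (i + 1)) - F (t i))|
      ≤ ε * (F (t (i + 1)) - F (t i)) := by
    intro i hi
    have hF : F.measure.real (Ioc (t i) (t (i + 1))) = F (t (i + 1)) - F (t i) := by
      rw [measureReal_def, F.measure_Ioc, ENNReal.toReal_ofReal (sub_nonneg.2 (F.mono (ht i hi)))]
    rw [← hF, intervalIntegral.integral_of_le (ht i hi), mul_comm, ← smul_eq_mul,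
      ← setIntegral_const, ← integral_sub
        ((intervalIntegrable_iff_integrableOn_Ioc_of_le (ht i hi)).1 (hint i hi))
        (integrableOn_const measure_Ioc_lt_top.ne), ← Real.norm_eq_abs]
    refine norm_setIntegral_le_of_norm_le_const measure_Ioc_lt_top fun u hu => ?_
    exact (Real.norm_eq_abs _).trans_le (hh i hi u (Ioc_subset_Icc_self hu))
  rw [← intervalIntegral.sum_integral_adjacent_intervals hint, ← Finset.sum_sub_distrib]
  calc _ ≤ ∑ i ∈ Finset.range n, ε * (F (t (i + 1)) - F (t i)) :=
        (Finset.abs_sum_le_sum_abs _ _).trans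
          (Finset.sum_le_sum fun i hi => hpiece i (Finset.mem_range.1 hi))
    _ = ε * (F (t n) - F (t 0)) := by
        rw [← Finset.mul_sum, Finset.sum_range_sub (fun i => F (t i))]

theorem Icc_subset_Icc_of_partition {t : ℕ → ℝ} {n : ℕ} (ht : ∀ i < n, t i ≤ t (i + 1))
    {i : ℕ} (hi : i < n) : Icc (t i) (t (i + 1)) ⊆ Icc (t 0) (t n) := by
  have hmono : MonotoneOn t (Iic n) := monotoneOn_of_le_succ ordConnected_Iic
    fun j _ _ hj => ht j (Order.succ_le_iff.1 hj)
  exact Icc_subset_Icc (hmono (Nat.zero_le _) (mem_Iic.2 hi.le) (Nat.zero_le _))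
    (hmono (mem_Iic.2 hi) (mem_Iic.2 le_rfl) hi)

section Curves

variable {E : Type*} [PseudoEMetricSpace E]

theorem eVariationOn_comp_projIcc_le {a b : ℝ} (hab : a ≤ b) (γ : ℝ → E) :
    eVariationOn (fun t => γ (projIcc a b hab t)) univ ≤ eVariationOn γ (Icc a b) :=
  eVariationOn.comp_le_of_monotoneOn γ (fun t => (projIcc a b hab t : ℝ))
    (fun _ _ _ _ hst => monotone_projIcc hab hst) fun t _ => (projIcc a b hab t).2

theorem eVariationOn_comp_projIcc_of_subset {a b p q : ℝ} (hab : a ≤ b) (γ : ℝ → E)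
    (hpq : Icc p q ⊆ Icc a b) :
    eVariationOn (fun t => γ (projIcc a b hab t)) (Icc p q) = eVariationOn γ (Icc p q) :=
  eVariationOn.eq_of_eqOn fun _ ht => by rw [projIcc_of_mem hab (hpq ht)]

variable {X : Type*} [MetricSpace X] {γ : ℝ → X}

theorem RectifiableCurve.boundedVariationOn_comp_projIcc (hrect : RectifiableCurve γ) :
    BoundedVariationOn (fun t : ℝ => γ (projIcc 0 1 zero_le_one t)) univ :=
  ((eVariationOn_comp_projIcc_le zero_le_one γ).trans_lt hrect.lt_top).ne

/-- `t ↦ ℓ(γ|[0,t])`, constant outside `[0,1]`. -/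
noncomputable def RectifiableCurve.arcLength (hγ : ContinuousOn γ (Icc 0 1))
    (hrect : RectifiableCurve γ) : StieltjesFunction ℝ where
  toFun := variationOnFromTo (fun t : ℝ => γ (projIcc 0 1 zero_le_one t)) univ 0
  mono' := monotoneOn_univ.1 <| variationOnFromTo.monotoneOn
    hrect.boundedVariationOn_comp_projIcc.locallyBoundedVariationOn (mem_univ 0)
  right_continuous' _ :=
    hrect.boundedVariationOn_comp_projIcc.continuousWithinAt_variationOnFromTo_Ici
      (hγ.comp_continuous (continuous_subtype_val.comp continuous_projIcc)
        fun t => (projIcc 0 1 zero_le_one t).2).continuousWithinAt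

theorem RectifiableCurve.arcLength_sub (hγ : ContinuousOn γ (Icc 0 1))
    (hrect : RectifiableCurve γ) {p q : ℝ} (hp : 0 ≤ p) (hpq : p ≤ q) (hq : q ≤ 1) :
    hrect.arcLength hγ q - hrect.arcLength hγ p = (eVariationOn γ (Icc p q)).toReal := by
  change variationOnFromTo _ univ 0 q - variationOnFromTo _ univ 0 p = _
  have hbv := hrect.boundedVariationOn_comp_projIcc.locallyBoundedVariationOn
  rw [← variationOnFromTo.add hbv (mem_univ 0) (mem_univ p) (mem_univ q), add_sub_cancel_left,
    variationOnFromTo.eq_of_le _ _ hpq, univ_inter,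
    eVariationOn_comp_projIcc_of_subset zero_le_one γ (Icc_subset_Icc hp hq)]

theorem RectifiableCurve.exists_isCurveIntegral
    (hγ : ContinuousOn γ (Icc 0 1)) (hrect : RectifiableCurve γ) {g : X → ℝ}
    (hg : ContinuousOn (g ∘ γ) (Icc 0 1)) : ∃ I, IsCurveIntegral γ g I := by
  set F := hrect.arcLength hγ
  set h : ℝ → ℝ := fun t => g (γ (projIcc 0 1 zero_le_one t))
  have hh : Continuous h := hg.comp_continuous (continuous_subtype_val.comp continuous_projIcc)
    fun t => (projIcc 0 1 zero_le_one t).2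
  refine ⟨∫ u in (0 : ℝ)..1, h u ∂F.measure, fun ε hε => ?_⟩
  have hF : 0 ≤ F 1 - F 0 := sub_nonneg.2 (F.mono zero_le_one)
  set ε' := ε / (F 1 - F 0 + 1)
  obtain ⟨δ, hδ, hUC⟩ := Metric.uniformContinuousOn_iff.1
    (isCompact_Icc.uniformContinuousOn_of_continuous hg) ε' (by positivity)
  refine ⟨δ, hδ, fun n t s _ ht0 htn ht hmesh hs => ?_⟩
  have hsub := fun i (hi : i < n) =>
    ht0 ▸ htn ▸ Icc_subset_Icc_of_partition (fun i hi => (ht i hi).le) hi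
  have hRS := F.abs_integral_sub_sum_le (h := h) (c := fun i => g (γ (s i))) (ε := ε')
    (fun i hi => (ht i hi).le) (fun i _ => hh.intervalIntegrable _ _) fun i hi u hu => by
      have hu01 := hsub i hi hu
      have hdist : dist u (s i) < δ := by
        rw [Real.dist_eq, abs_lt]
        constructor <;> linarith [hs i hi |>.1, hs i hi |>.2, hu.1, hu.2, hmesh i hi]
      rw [← Real.dist_eq, show h u = g (γ u) by simp only [h, projIcc_of_mem _ hu01]]
      exact (hUC u hu01 (s i) (hsub i hi (hs i hi)) hdist).le
  have hsum : ∑ i ∈ Finset.range n, g (γ (s i)) * (F (t (i + 1)) - F (t i)) =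
      ∑ i ∈ Finset.range n, g (γ (s i)) * (eVariationOn γ (Icc (t i) (t (i + 1)))).toReal := by
    refine Finset.sum_congr rfl fun i hi => ?_
    replace hi := Finset.mem_range.1 hi
    rw [hrect.arcLength_sub hγ (hsub i hi (left_mem_Icc.2 (ht i hi).le)).1 (ht i hi).le
      (hsub i hi (right_mem_Icc.2 (ht i hi).le)).2]
  rw [ht0, htn, hsum] at hRS
  calc _ ≤ ε' * (F 1 - F 0) := hRS
    _ < ε := by
      rw [div_mul_eq_mul_div, div_lt_iff₀ (by positivity)]
      nlinarith

end Curves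

theorem innerDist_le_toReal_eVariationOn {Y : Type*} [MetricSpace Y] {δ : ℝ → Y} {u v : Y}
    (hδ : IsCurveFrom δ u v) (hfin : eVariationOn δ (Icc 0 1) ≠ ⊤) :
    innerDist u v ≤ (eVariationOn δ (Icc 0 1)).toReal := by
  by_cases hbdd : BddBelow {L | ∃ δ : ℝ → Y, IsCurveFrom δ u v ∧
      eVariationOn δ (Icc 0 1) = ENNReal.ofReal L}
  · exact csInf_le hbdd ⟨δ, hδ, (ENNReal.ofReal_toReal hfin).symm⟩
  · rw [innerDist, Real.sInf_of_not_bddBelow hbdd]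
    exact ENNReal.toReal_nonneg

section Bound

variable {X Y : Type*} [MetricSpace X] [MetricSpace Y] {f : X → Y} {γ : ℝ → X}

theorem eVariationOn_comp_le_mul_of_Dstar_le {a b : ℝ} {c : ℝ≥0∞}
    (hγ : ContinuousOn γ (Icc a b)) (hc : ∀ t ∈ Icc a b, Dstar f (γ t) ≤ c) (hc_top : c ≠ ⊤)
    (hγ_fin : eVariationOn γ (Icc a b) ≠ ⊤) :
    eVariationOn (f ∘ γ) (Icc a b) ≤ c * eVariationOn γ (Icc a b) := by
  have : (𝓝[>] c).NeBot := nhdsGT_neBot_of_exists_gt ⟨⊤, hc_top.lt_top⟩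
  refine ge_of_tendsto (ENNReal.Tendsto.mul_const
    (tendsto_nhdsWithin_of_tendsto_nhds (tendsto_id (x := 𝓝 c)) (s := Ioi c)) (Or.inr hγ_fin)) ?_
  filter_upwards [self_mem_nhdsWithin] with c' hc'
  exact eVariationOn_le_mul_of_eventually fun t ht =>
    hγ t ht (eventually_edist_le_of_Dstar_lt ((hc t ht).trans_lt hc'))

theorem IsCurveIntegral.exists_uniform_partition {g : X → ℝ} {I : ℝ}
    (h : IsCurveIntegral γ g I) {ε : ℝ} (hε : 0 < ε) :
    ∃ n : ℕ, 0 < n ∧ ∀ s : ℕ → ℝ, (∀ i < n, s i ∈ Icc (i / n : ℝ) ((i + 1) / n)) →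
      |I - ∑ i ∈ Finset.range n,
        g (γ (s i)) * (eVariationOn γ (Icc (i / n : ℝ) ((i + 1) / n))).toReal| < ε := by
  obtain ⟨δ, hδ, hRS⟩ := h ε hε
  obtain ⟨n, hn⟩ := exists_nat_gt (1 / δ)
  have hn0 : (0 : ℝ) < n := (one_div_pos.2 hδ).trans hn
  refine ⟨n, Nat.cast_pos.1 hn0, fun s hs => ?_⟩
  refine hRS n (fun i => i / n) s (Nat.cast_pos.1 hn0) (by simp) (div_self hn0.ne') (fun i _ => ?_)
    (fun i _ => ?_) (fun i hi => by simpa using hs i hi) |>.trans_eq' ?_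
  · simp only [Nat.cast_succ]
    gcongr
    linarith
  · rw [Nat.cast_succ, div_sub_div_same, add_sub_cancel_left, div_lt_iff₀ hn0]
    rwa [div_lt_iff₀ hδ, mul_comm] at hn
  · simp

theorem IsCurveIntegral.nonneg {g : X → ℝ} {I : ℝ} (h : IsCurveIntegral γ g I)
    (hg : ∀ x, 0 ≤ g x) : 0 ≤ I := by
  refine le_of_forall_pos_lt_add fun ε hε => ?_
  obtain ⟨n, -, hn⟩ := h.exists_uniform_partition hε
  have hRS := hn (fun i => i / n) fun i _ => ⟨le_rfl, by gcongr; linarith⟩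
  have hsum := Finset.sum_nonneg fun i (_ : i ∈ Finset.range n) =>
    mul_nonneg (hg (γ (i / n))) (eVariationOn γ (Icc (i / n : ℝ) ((i + 1) / n))).toReal_nonneg
  linarith [(abs_lt.1 hRS).1]

theorem eVariationOn_comp_le_add_of_isCurveIntegral {w : X → ℝ} {B I ε : ℝ} (hB0 : 0 ≤ B)
    (hw : ∀ x, 0 ≤ w x) (hB : ∀ z, Dstar f z ≤ ENNReal.ofReal (B * w z))
    (hγ : ContinuousOn γ (Icc 0 1)) (hrect : RectifiableCurve γ)
    (hwγ : ContinuousOn (w ∘ γ) (Icc 0 1)) (hI : IsCurveIntegral γ w I) (hε : 0 < ε) :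
    eVariationOn (f ∘ γ) (Icc 0 1) ≤ ENNReal.ofReal (B * (I + ε)) := by
  obtain ⟨n, hn, hsum⟩ := hI.exists_uniform_partition hε
  set t : ℕ → ℝ := fun i => i / n
  have ht : Monotone t := fun i j hij => by simp only [t]; gcongr
  have hsub : ∀ i < n, Icc (t i) (t (i + 1)) ⊆ Icc 0 1 := fun i hi => by
    refine Icc_subset_Icc (by positivity) ((div_le_one (by positivity)).2 ?_)
    exact_mod_cast hi
  have hmax : ∀ i < n, ∃ s ∈ Icc (t i) (t (i + 1)), IsMaxOn (w ∘ γ) (Icc (t i) (t (i + 1))) s :=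
    fun i hi => isCompact_Icc.exists_isMaxOn (nonempty_Icc.2 (ht i.le_succ)) (hwγ.mono (hsub i hi))
  choose! s hs hsmax using hmax
  have hpiece : ∀ i < n, eVariationOn (f ∘ γ) (Icc (t i) (t (i + 1))) ≤
      ENNReal.ofReal (B * w (γ (s i)) * (eVariationOn γ (Icc (t i) (t (i + 1)))).toReal) := by
    intro i hi
    have hfin : eVariationOn γ (Icc (t i) (t (i + 1))) ≠ ⊤ :=
      ne_top_of_le_ne_top hrect (eVariationOn.mono γ (hsub i hi))
    rw [ENNReal.ofReal_mul (mul_nonneg hB0 (hw _)), ENNReal.ofReal_toReal hfin]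
    refine eVariationOn_comp_le_mul_of_Dstar_le (hγ.mono (hsub i hi)) (fun τ hτ => ?_)
      ENNReal.ofReal_ne_top hfin
    exact (hB _).trans (ENNReal.ofReal_le_ofReal (mul_le_mul_of_nonneg_left (hsmax i hi hτ) hB0))
  calc eVariationOn (f ∘ γ) (Icc 0 1)
      = ∑ i ∈ Finset.range n, eVariationOn (f ∘ γ) (Icc (t i) (t (i + 1))) := by
        rw [eVariationOn.sum' _ ht]
        simp [t, (Nat.cast_pos.2 hn).ne']
    _ ≤ ∑ i ∈ Finset.range n,
          ENNReal.ofReal (B * w (γ (s i)) * (eVariationOn γ (Icc (t i) (t (i + 1)))).toReal) :=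
        Finset.sum_le_sum fun i hi => hpiece i (Finset.mem_range.1 hi)
    _ = ENNReal.ofReal (B * ∑ i ∈ Finset.range n,
          w (γ (s i)) * (eVariationOn γ (Icc (t i) (t (i + 1)))).toReal) := by
        rw [← ENNReal.ofReal_sum_of_nonneg fun i _ => by have := hw (γ (s i)); positivity,
          Finset.mul_sum]
        simp only [mul_assoc]
    _ ≤ ENNReal.ofReal (B * (I + ε)) := by
        gcongr
        have hRS := hsum s fun i hi => by simpa [t] using hs i hi
        simp only [t, Nat.cast_succ]
        linarith [(abs_lt.1 hRS).1]

theorem eVariationOn_comp_le_of_isCurveIntegral {w : X → ℝ} {B I : ℝ} (hB0 : 0 ≤ B)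
    (hw : ∀ x, 0 ≤ w x) (hB : ∀ z, Dstar f z ≤ ENNReal.ofReal (B * w z))
    (hγ : ContinuousOn γ (Icc 0 1)) (hrect : RectifiableCurve γ)
    (hwγ : ContinuousOn (w ∘ γ) (Icc 0 1)) (hI : IsCurveIntegral γ w I) :
    eVariationOn (f ∘ γ) (Icc 0 1) ≤ ENNReal.ofReal (B * I) := by
  have hlim : Tendsto (fun ε => ENNReal.ofReal (B * (I + ε))) (𝓝[>] 0)
      (𝓝 (ENNReal.ofReal (B * (I + 0)))) :=
    ((ENNReal.continuous_ofReal.comp (by fun_prop)).tendsto 0).mono_left nhdsWithin_le_nhds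
  rw [add_zero] at hlim
  exact ge_of_tendsto hlim <| eventually_nhdsWithin_of_forall fun ε hε =>
    eVariationOn_comp_le_add_of_isCurveIntegral hB0 hw hB hγ hrect hwγ hI hε

theorem innerDist_le_mul_of_isCurveIntegral {w : X → ℝ} {B I : ℝ} {x y : X} (hB0 : 0 ≤ B)
    (hw : ∀ x, 0 ≤ w x) (hB : ∀ z, Dstar f z ≤ ENNReal.ofReal (B * w z))
    (hγ : IsCurveFrom γ x y) (hrect : RectifiableCurve γ)
    (hwγ : ContinuousOn (w ∘ γ) (Icc 0 1)) (hI : IsCurveIntegral γ w I) :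
    innerDist (f x) (f y) ≤ B * I := by
  have hf : Continuous f := continuous_iff_continuousAt.2 fun z =>
    continuousAt_of_Dstar_ne_top ((hB z).trans_lt ENNReal.ofReal_lt_top).ne
  have hvar := eVariationOn_comp_le_of_isCurveIntegral hB0 hw hB hγ.1 hrect hwγ hI
  have hfγ : IsCurveFrom (f ∘ γ) (f x) (f y) :=
    ⟨hf.comp_continuousOn hγ.1, by simp [hγ.2.1], by simp [hγ.2.2]⟩
  calc innerDist (f x) (f y) ≤ (eVariationOn (f ∘ γ) (Icc 0 1)).toReal :=
        innerDist_le_toReal_eVariationOn hfγ (ne_top_of_le_ne_top ENNReal.ofReal_ne_top hvar)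
    _ ≤ B * I := ENNReal.toReal_le_of_le_ofReal (mul_nonneg hB0 (hI.nonneg hw)) hvar

end Bound

theorem lipschitz_wDist_innerDist {X Y : Type*} [MetricSpace X] [MetricSpace Y]
    (w : X → ℝ) (hwc : Continuous w) (hwpos : ∀ x, 0 < w x)
    (f : X → Y) (B : ℝ) (hB0 : 0 ≤ B)
    (hB : ∀ z, Dstar f z ≤ ENNReal.ofReal (B * w z)) :
    ∀ x y : X, (∃ γ : ℝ → X, IsCurveFrom γ x y ∧ RectifiableCurve γ) →
      innerDist (f x) (f y) ≤ B * wDist w x y := by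
  rintro x y ⟨γ₀, hγ₀, hrect₀⟩
  obtain ⟨I₀, hI₀⟩ := hrect₀.exists_isCurveIntegral hγ₀.1 (hwc.comp_continuousOn hγ₀.1)
  rw [wDist, ← smul_eq_mul, ← Real.sInf_smul_of_nonneg hB0]
  refine le_csInf (Set.Nonempty.smul_set ⟨I₀, γ₀, hγ₀, hrect₀, hI₀⟩) ?_
  rintro _ ⟨I, ⟨γ, hγ, hrect, hI⟩, rfl⟩
  exact innerDist_le_mul_of_isCurveIntegral hB0 (fun z => (hwpos z).le) hB hγ hrect
    (hwc.comp_continuousOn hγ.1) hI
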